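/- Consider a finite recurrent MDP on S that is skip-free in the negative direction on the tree, and fix x ∈ ℝ. Define y_i ∈ ℝ and a_i ∈ A for all i ≠ 0 by downward recursion on the tree: y_i = min_{a∈A} (c_i(a) − x + ∑_{k∈D(i)} p̄_{ik}(a) y_k)/p_{iρ(i)}(a), with a_i an action attaining this minimum (the sum being empty when D(i) = ∅). Then for every stationary deterministic policy d' and every i ≠ 0, the expected x-revised first-passage cost from i to ρ(i) under d' is at least y_i; any policy d with d(i) = a_i for all i ≠ 0 achieves expected x-revised first-passage cost exactly y_i from i to ρ(i) for every i ≠ 0; and consequently the minimal (over stationary deterministic policies) expected x-revised cost until first passage from i to state 0 equals ∑_{k∈Δ(0,i)} y_k. -/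

import Mathlib

open Finset Filter

noncomputable section

/-- A rooted tree structure on a state space `S`: a root, a parent map fixing the root,
such that iterating the parent map from any state reaches the root. -/
structure SFTree (S : Type*) where
  root : S
  parent : S → S
  parent_root : parent root = root
  reaches_root : ∀ i : S, ∃ n : ℕ, parent^[n] i = root

namespace SFTree

variable {S : Type*} [Fintype S] [DecidableEq S]

open Classical in
/-- The set of descendants of `i`: states `j ≠ i` whose path to the root passes through `i`. -/
def desc (T : SFTree S) (i : S) : Finset S :=
  Finset.univ.filter fun j => j ≠ i ∧ ∃ n : ℕ, T.parent^[n] j = i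

open Classical in
/-- The subtree rooted at `i`: `i` together with its descendants. -/
def subtree (T : SFTree S) (i : S) : Finset S :=
  Finset.univ.filter fun j => ∃ n : ℕ, T.parent^[n] j = i

open Classical in
/-- The states strictly after `i` on the path from `i` to `j`. -/
def delta (T : SFTree S) (i j : S) : Finset S :=
  Finset.univ.filter fun r =>
    r ≠ i ∧ (∃ n : ℕ, T.parent^[n] j = r) ∧ (∃ m : ℕ, T.parent^[m] r = i)

end SFTree

/-- A finite Markov decision process: costs and transition probabilities. -/
structure MDP (S A : Type*) [Fintype S] where
  c : S → A → ℝ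
  p : S → A → S → ℝ
  p_nonneg : ∀ i a j, 0 ≤ p i a j
  p_sum_one : ∀ i a, ∑ j, p i a j = 1

namespace MDP

variable {S A : Type*} [Fintype S] [DecidableEq S]

/-- Tail probability: the probability of jumping from `i` into the subtree rooted at `k`. -/
def ptail (M : MDP S A) (T : SFTree S) (i : S) (a : A) (k : S) : ℝ :=
  ∑ s ∈ T.subtree k, M.p i a s

/-- Skip-free in the negative direction on the tree `T`: from `i ≠ root` the only possible
transitions are to the parent of `i` or into the subtree rooted at `i`. -/
def IsSkipFree (M : MDP S A) (T : SFTree S) : Prop :=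
  ∀ i, i ≠ T.root → ∀ a j, M.p i a j ≠ 0 → j = T.parent i ∨ j ∈ T.subtree i

/-- Transition matrix of the stationary deterministic policy `d`. -/
def Pmat (M : MDP S A) (d : S → A) : Matrix S S ℝ :=
  Matrix.of fun i j => M.p i (d i) j

/-- Cost vector of the stationary deterministic policy `d`. -/
def cvec (M : MDP S A) (d : S → A) : S → ℝ := fun i => M.c i (d i)

/-- Expected average cost of the stationary deterministic policy `d` starting from `i`. -/
def avgCost (M : MDP S A) (d : S → A) (i : S) : ℝ :=
  Filter.limsup
    (fun n : ℕ => (n : ℝ)⁻¹ * ∑ t ∈ Finset.range n, ((M.Pmat d ^ t).mulVec (M.cvec d)) i)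
    Filter.atTop

end MDP

/-- A (substochastic) matrix is irreducible if every state can reach every other state
in a positive number of steps. -/
def MatIrreducible {S : Type*} [Fintype S] [DecidableEq S] (P : Matrix S S ℝ) : Prop :=
  ∀ i j, ∃ n : ℕ, 0 < n ∧ 0 < (P ^ n) i j

/-- A recurrent model: every stationary deterministic policy has an irreducible
transition matrix. -/
def IsRecurrentModel {S A : Type*} [Fintype S] [DecidableEq S] (M : MDP S A) : Prop :=
  ∀ d : S → A, MatIrreducible (M.Pmat d)

/-- The probability weight of a path of length `n`. -/
def pathWt {S : Type*} [Fintype S] (P : Matrix S S ℝ) {n : ℕ} (x : Fin (n + 1) → S) : ℝ :=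
  ∏ t : Fin n, P (x t.castSucc) (x t.succ)

open Classical in
/-- `E[f(X_n); τ > n]` for the chain with matrix `P` started at `z`, where `τ` is the
first-return epoch to `z` (the first time the chain enters `z` from a state `≠ z`). -/
def retTerm {S : Type*} [Fintype S] (P : Matrix S S ℝ) (z : S) (f : S → ℝ) (n : ℕ) : ℝ :=
  ∑ x ∈ Finset.univ.filter
      (fun (x : Fin (n + 1) → S) =>
        x 0 = z ∧ ∀ t : Fin n, ¬(x t.castSucc ≠ z ∧ x t.succ = z)),
    pathWt P x * f (x (Fin.last n))

/-- `E[∑_{t=0}^{τ-1} f(X_t)]` for the chain with matrix `P` started at `z`, where `τ` is the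
first-return epoch to `z`. -/
def retSum {S : Type*} [Fintype S] (P : Matrix S S ℝ) (z : S) (f : S → ℝ) : ℝ :=
  ∑' n : ℕ, retTerm P z f n

open Classical in
/-- `E[f(X_n); σ > n]` for the chain with matrix `P` started at `i`, where `σ` is the
first-passage epoch to `z`, `σ = min {t > 0 : X_t = z}`. -/
def passTerm {S : Type*} [Fintype S] (P : Matrix S S ℝ) (i z : S) (f : S → ℝ) (n : ℕ) : ℝ :=
  ∑ x ∈ Finset.univ.filter
      (fun (x : Fin (n + 1) → S) => x 0 = i ∧ ∀ t : Fin n, x t.succ ≠ z),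
    pathWt P x * f (x (Fin.last n))

/-- `E[∑_{t=0}^{σ-1} f(X_t)]` for the chain with matrix `P` started at `i`, where `σ` is the
first-passage epoch to `z`. -/
def passSum {S : Type*} [Fintype S] (P : Matrix S S ℝ) (i z : S) (f : S → ℝ) : ℝ :=
  ∑' n : ℕ, passTerm P i z f n

end

/-!
By skip-freeness, the chain started in the subtree `T(j)` can only leave it through `j` and then
`ρ(j)`, so it reaches `ρ(j)` from `m ∈ T(j)` by successively passing from each `k ∈ Δ(ρ(j), m)`
to `ρ(k)`. Hence the first-passage cost from `m` to `ρ(j)` is `∑_{k ∈ Δ(ρ(j), m)} u_k`, where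
`u_k` is the first-passage cost from `k` to `ρ(k)`: the right-hand side solves the first-step
equations of the chain with `ρ(j)` made taboo, and these have a unique solution because
recurrence makes the powers of the taboo matrix summable. Splitting the first step from `j` by
skip-freeness then gives `p_{jρ(j)} u_j = c_j - x + ∑_{k ∈ D(j)} p̄_{jk} u_k`, so `u` satisfies
the recursion of `y` with the policy's own action in place of the minimum, and induction down
the tree compares `u` with `y`.
-/
namespace SFTree

variable {S : Type*} (T : SFTree S)

lemma iterate_parent_root (n : ℕ) : T.parent^[n] T.root = T.root :=
  Function.iterate_fixed T.parent_root n

lemma eq_root_of_iterate_eq_self {j : S} {n : ℕ} (hn : 0 < n) (h : T.parent^[n] j = j) :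
    j = T.root := by
  obtain ⟨K, hK⟩ := T.reaches_root j
  have hper : Function.IsPeriodicPt T.parent (n * K) j :=
    (show Function.IsPeriodicPt T.parent n j from h).mul_const K
  have := hper.eq
  rw [← Nat.sub_add_cancel (Nat.le_mul_of_pos_left K hn), Function.iterate_add_apply, hK,
    iterate_parent_root] at this
  exact this.symm

variable [Fintype S]

@[simp] lemma mem_subtree {i j : S} : j ∈ T.subtree i ↔ ∃ n, T.parent^[n] j = i := by
  simp [subtree]

lemma mem_subtree_self (i : S) : i ∈ T.subtree i := T.mem_subtree.2 ⟨0, rfl⟩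

lemma mem_subtree_iff_eq_or_parent_mem {i j : S} :
    j ∈ T.subtree i ↔ j = i ∨ T.parent j ∈ T.subtree i := by
  simp only [mem_subtree]
  constructor
  · rintro ⟨_ | n, hn⟩
    · exact .inl hn
    · exact .inr ⟨n, hn⟩
  · rintro (rfl | ⟨n, hn⟩)
    · exact ⟨0, rfl⟩
    · exact ⟨n + 1, hn⟩

lemma mem_subtree_parent (j : S) : j ∈ T.subtree (T.parent j) := T.mem_subtree.2 ⟨1, rfl⟩

lemma subtree_subset {i j : S} (h : j ∈ T.subtree i) : T.subtree j ⊆ T.subtree i := by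
  intro l hl
  obtain ⟨n, hn⟩ := T.mem_subtree.1 hl
  obtain ⟨m, hm⟩ := T.mem_subtree.1 h
  exact T.mem_subtree.2 ⟨m + n, by rw [Function.iterate_add_apply, hn, hm]⟩

lemma eq_of_mem_subtree_of_mem_subtree {i j : S} (hji : j ∈ T.subtree i)
    (hij : i ∈ T.subtree j) : i = j := by
  obtain ⟨n, hn⟩ := T.mem_subtree.1 hji
  obtain ⟨m, hm⟩ := T.mem_subtree.1 hij
  have hcycle : T.parent^[n + m] i = i := by rw [Function.iterate_add_apply, hm, hn]
  rcases Nat.eq_zero_or_pos (n + m) with h0 | hpos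
  · rw [← hn, show n = 0 by omega, Function.iterate_zero_apply]
  · have hi := T.eq_root_of_iterate_eq_self hpos hcycle
    rw [← hm, hi, iterate_parent_root]

lemma mem_subtree_total {l m r : S} (hm : l ∈ T.subtree m) (hr : l ∈ T.subtree r) :
    r ∈ T.subtree m ∨ m ∈ T.subtree r := by
  obtain ⟨a, ha⟩ := T.mem_subtree.1 hm
  obtain ⟨b, hb⟩ := T.mem_subtree.1 hr
  rcases le_total a b with h | h
  · refine .inr (T.mem_subtree.2 ⟨b - a, ?_⟩)
    rw [← ha, ← Function.iterate_add_apply, Nat.sub_add_cancel h, hb]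
  · refine .inl (T.mem_subtree.2 ⟨a - b, ?_⟩)
    rw [← hb, ← Function.iterate_add_apply, Nat.sub_add_cancel h, ha]

lemma ne_root_of_mem_subtree {i j : S} (hi : i ≠ T.root) (h : j ∈ T.subtree i) :
    j ≠ T.root := by
  rintro rfl
  obtain ⟨n, hn⟩ := T.mem_subtree.1 h
  exact hi (by rw [← hn, iterate_parent_root])

lemma parent_not_mem_subtree {j : S} (hj : j ≠ T.root) : T.parent j ∉ T.subtree j := by
  intro h
  obtain ⟨n, hn⟩ := T.mem_subtree.1 h
  exact hj (T.eq_root_of_iterate_eq_self n.succ_pos hn)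

lemma parent_mem_subtree {i j : S} (h : j ∈ T.subtree i) (hne : j ≠ i) :
    T.parent j ∈ T.subtree i :=
  (T.mem_subtree_iff_eq_or_parent_mem.1 h).resolve_left hne

lemma exists_parent_eq_root_of_ne_root {i : S} (hi : i ≠ T.root) :
    ∃ t, t ≠ T.root ∧ T.parent t = T.root ∧ i ∈ T.subtree t := by
  obtain ⟨n, hn⟩ := T.reaches_root i
  induction n generalizing i with
  | zero => exact absurd hn hi
  | succ n ih =>
    by_cases hpi : T.parent i = T.root
    · exact ⟨i, hi, hpi, T.mem_subtree_self i⟩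
    · obtain ⟨t, ht, hpt, hit⟩ := ih hpi hn
      exact ⟨t, ht, hpt, T.subtree_subset hit (T.mem_subtree_parent _)⟩

variable [DecidableEq S]

lemma mem_desc {i j : S} : j ∈ T.desc i ↔ j ∈ T.subtree i ∧ j ≠ i := by
  simp [desc, and_comm]

lemma mem_delta {i j r : S} : r ∈ T.delta i j ↔ r ∈ T.desc i ∧ j ∈ T.subtree r := by
  simp [delta, mem_desc]
  tauto

lemma mem_desc_parent {j : S} (hj : j ≠ T.root) : j ∈ T.desc (T.parent j) :=
  T.mem_desc.2 ⟨T.mem_subtree_parent _, fun h => T.parent_not_mem_subtree hj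
    (h ▸ T.mem_subtree_self j)⟩

lemma card_subtree_lt {i j : S} (h : j ∈ T.desc i) :
    (T.subtree j).card < (T.subtree i).card := by
  obtain ⟨hji, hne⟩ := T.mem_desc.1 h
  refine Finset.card_lt_card ⟨T.subtree_subset hji, fun hsub => hne ?_⟩
  exact (T.eq_of_mem_subtree_of_mem_subtree hji (hsub (T.mem_subtree_self i))).symm

theorem desc_induction {motive : S → Prop} (h : ∀ j, (∀ m ∈ T.desc j, motive m) → motive j)
    (j : S) : motive j :=
  (measure fun j => (T.subtree j).card).wf.induction j fun j ih =>
    h j fun m hm => ih m (T.card_subtree_lt hm)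

lemma delta_parent_self {j : S} (hj : j ≠ T.root) : T.delta (T.parent j) j = {j} := by
  ext r
  simp only [mem_delta, Finset.mem_singleton]
  constructor
  · rintro ⟨hr, hjr⟩
    obtain ⟨hr', hne⟩ := T.mem_desc.1 hr
    rcases T.mem_subtree_iff_eq_or_parent_mem.1 hjr with rfl | hpr
    · rfl
    · exact absurd (T.eq_of_mem_subtree_of_mem_subtree hpr hr') hne
  · rintro rfl
    exact ⟨T.mem_desc_parent hj, T.mem_subtree_self r⟩

lemma disjoint_delta (i m l : S) : Disjoint (T.delta i m) (T.delta m l) := by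
  refine Finset.disjoint_left.2 fun r h1 h2 => ?_
  obtain ⟨hrm, hne⟩ := T.mem_desc.1 (T.mem_delta.1 h2).1
  exact hne (T.eq_of_mem_subtree_of_mem_subtree (T.mem_delta.1 h1).2 hrm)

lemma delta_eq_union {i m l : S} (hm : m ∈ T.subtree i) (hl : l ∈ T.subtree m) :
    T.delta i l = T.delta i m ∪ T.delta m l := by
  ext r
  simp only [Finset.mem_union, mem_delta, mem_desc]
  constructor
  · rintro ⟨⟨hri, hne⟩, hlr⟩
    rcases T.mem_subtree_total hl hlr with hrm | hmr
    · by_cases hrm' : r = m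
      · exact .inl ⟨⟨hri, hne⟩, hrm' ▸ T.mem_subtree_self r⟩
      · exact .inr ⟨⟨hrm, hrm'⟩, hlr⟩
    · exact .inl ⟨⟨hri, hne⟩, hmr⟩
  · rintro (⟨hri, hmr⟩ | ⟨⟨hrm, hne⟩, hlr⟩)
    · exact ⟨hri, T.subtree_subset hmr hl⟩
    · refine ⟨⟨T.subtree_subset hm hrm, fun hri => hne ?_⟩, hlr⟩
      subst hri
      exact T.eq_of_mem_subtree_of_mem_subtree hm hrm

lemma sum_delta_eq_add {β : Type*} [AddCommMonoid β] (u : S → β) {i m l : S}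
    (hm : m ∈ T.subtree i) (hl : l ∈ T.subtree m) :
    ∑ k ∈ T.delta i l, u k = ∑ k ∈ T.delta i m, u k + ∑ k ∈ T.delta m l, u k := by
  rw [T.delta_eq_union hm hl, Finset.sum_union (T.disjoint_delta i m l)]

lemma sum_delta_parent {β : Type*} [AddCommMonoid β] (u : S → β) {i m : S}
    (hm : m ∈ T.desc i) :
    ∑ k ∈ T.delta i m, u k = ∑ k ∈ T.delta i (T.parent m), u k + u m := by
  obtain ⟨hmi, hne⟩ := T.mem_desc.1 hm
  have hroot : m ≠ T.root := fun h => hne (by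
    obtain ⟨n, hn⟩ := T.mem_subtree.1 hmi
    rw [← hn, h, iterate_parent_root])
  rw [T.sum_delta_eq_add u (T.parent_mem_subtree hmi hne) (T.mem_subtree_parent _),
    T.delta_parent_self hroot, Finset.sum_singleton]

lemma sum_subtree_mul_sum_delta {R : Type*} [NonUnitalNonAssocSemiring R] (w u : S → R)
    (m : S) :
    ∑ l ∈ T.subtree m, w l * ∑ k ∈ T.delta m l, u k
      = ∑ k ∈ T.desc m, (∑ l ∈ T.subtree k, w l) * u k := by
  simp only [Finset.mul_sum, Finset.sum_mul]
  refine Finset.sum_comm' fun l k => ?_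
  simp only [mem_delta, mem_desc]
  constructor
  · rintro ⟨-, hk, hlk⟩
    exact ⟨hlk, hk⟩
  · rintro ⟨hlk, hk⟩
    exact ⟨T.subtree_subset hk.1 hlk, hk, hlk⟩

end SFTree

lemma pow_div_le_inv_mul_rpow_pow {θ : ℝ} (hθ0 : 0 < θ) (hθ1 : θ ≤ 1) {N : ℕ} (hN : 0 < N)
    (n : ℕ) : θ ^ (n / N) ≤ θ⁻¹ * (θ ^ (N⁻¹ : ℝ)) ^ n := by
  set r := θ ^ (N⁻¹ : ℝ)
  have hr0 : 0 ≤ r := by positivity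
  have hr1 : r ≤ 1 := Real.rpow_le_one hθ0.le hθ1 (by positivity)
  have hrN : r ^ N = θ := Real.rpow_inv_natCast_pow hθ0.le hN.ne'
  rw [le_inv_mul_iff₀ hθ0, ← hrN, ← pow_mul, ← pow_add]
  refine pow_le_pow_of_le_one hr0 hr1 ?_
  rw [add_comm, ← mul_add_one]
  exact (Nat.lt_mul_div_succ n hN).le

namespace Matrix

variable {S : Type*} [Fintype S]

lemma mulVec_mono_of_nonneg {R : Type*} [Semiring R] [PartialOrder R] [IsOrderedRing R]
    {A : Matrix S S R} (hA : ∀ i j, 0 ≤ A i j) {v w : S → R} (h : v ≤ w) :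
    A *ᵥ v ≤ A *ᵥ w :=
  fun i => Finset.sum_le_sum fun j _ => mul_le_mul_of_nonneg_left (h j) (hA i j)

lemma mulVec_nonneg_of_nonneg {R : Type*} [Semiring R] [PartialOrder R] [IsOrderedRing R]
    {A : Matrix S S R} (hA : ∀ i j, 0 ≤ A i j) {v : S → R} (hv : 0 ≤ v) : 0 ≤ A *ᵥ v := by
  simpa using mulVec_mono_of_nonneg hA hv

lemma abs_mulVec_le_mulVec_abs {A : Matrix S S ℝ} (hA : ∀ i j, 0 ≤ A i j) (v : S → ℝ) :
    |A *ᵥ v| ≤ A *ᵥ |v| := fun i =>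
  (Finset.abs_sum_le_sum_abs _ _).trans_eq <| Finset.sum_congr rfl fun j _ => by
    rw [abs_mul, abs_of_nonneg (hA i j), Pi.abs_apply]

variable [DecidableEq S] {A : Matrix S S ℝ}

lemma pow_mulVec_abs_le (hA : ∀ i j, 0 ≤ A i j) (n : ℕ) (v : S → ℝ) :
    A ^ n *ᵥ |v| ≤ ‖v‖ • (A ^ n *ᵥ 1) := by
  rw [← mulVec_smul]
  refine mulVec_mono_of_nonneg (pow_apply_nonneg hA n) fun j => ?_
  simpa using norm_le_pi_norm v j

lemma antitone_pow_mulVec_one (hA : ∀ i j, 0 ≤ A i j) (hA1 : A *ᵥ 1 ≤ 1) :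
    Antitone fun n => A ^ n *ᵥ 1 := by
  refine antitone_nat_of_succ_le fun n => ?_
  rw [pow_succ, ← mulVec_mulVec]
  exact mulVec_mono_of_nonneg (pow_apply_nonneg hA n) hA1

lemma summable_pow_mulVec_one (hA : ∀ i j, 0 ≤ A i j) (hA1 : A *ᵥ 1 ≤ 1) {N : ℕ} (hN : 0 < N)
    {θ : ℝ} (hθ0 : 0 < θ) (hθ1 : θ < 1) (hAN : A ^ N *ᵥ 1 ≤ θ • 1) (i : S) :
    Summable fun n => (A ^ n *ᵥ 1) i := by
  have hblock : ∀ q, A ^ (N * q) *ᵥ 1 ≤ θ ^ q • 1 := by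
    intro q
    induction q with
    | zero => simp
    | succ q ih =>
      calc A ^ (N * (q + 1)) *ᵥ 1 = A ^ (N * q) *ᵥ (A ^ N *ᵥ 1) := by
            rw [mulVec_mulVec, ← pow_add, mul_add_one]
        _ ≤ A ^ (N * q) *ᵥ (θ • 1) := mulVec_mono_of_nonneg (pow_apply_nonneg hA _) hAN
        _ ≤ θ ^ (q + 1) • 1 := by
            rw [mulVec_smul, pow_succ', mul_smul]
            exact smul_le_smul_of_nonneg_left ih hθ0.le
  have hbound : ∀ n, (A ^ n *ᵥ 1) i ≤ θ⁻¹ * (θ ^ (N⁻¹ : ℝ)) ^ n := fun n =>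
    calc (A ^ n *ᵥ 1) i ≤ (A ^ (N * (n / N)) *ᵥ 1) i :=
          antitone_pow_mulVec_one hA hA1 (Nat.mul_div_le n N) i
      _ ≤ θ ^ (n / N) := by simpa using hblock (n / N) i
      _ ≤ θ⁻¹ * (θ ^ (N⁻¹ : ℝ)) ^ n := pow_div_le_inv_mul_rpow_pow hθ0 hθ1.le hN n
  refine Summable.of_nonneg_of_le (fun n => ?_) hbound
    ((summable_geometric_of_lt_one (by positivity)
      (Real.rpow_lt_one hθ0.le hθ1 (by positivity))).mul_left _)
  exact mulVec_nonneg_of_nonneg (pow_apply_nonneg hA n) zero_le_one i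

lemma summable_pow_mulVec (hA : ∀ i j, 0 ≤ A i j)
    (hsum : ∀ i, Summable fun n => (A ^ n *ᵥ 1) i) (v : S → ℝ) (i : S) :
    Summable fun n => (A ^ n *ᵥ v) i := by
  refine Summable.of_norm_bounded ((hsum i).mul_left ‖v‖) fun n => ?_
  calc ‖(A ^ n *ᵥ v) i‖ ≤ (A ^ n *ᵥ |v|) i :=
        abs_mulVec_le_mulVec_abs (pow_apply_nonneg hA n) v i
    _ ≤ ‖v‖ * (A ^ n *ᵥ 1) i := pow_mulVec_abs_le hA n v i

lemma eq_zero_of_abs_le_mulVec_abs (hA : ∀ i j, 0 ≤ A i j)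
    (hsum : ∀ i, Summable fun n => (A ^ n *ᵥ 1) i) {e : S → ℝ} (he : |e| ≤ A *ᵥ |e|) :
    e = 0 := by
  have hiter : ∀ n, |e| ≤ A ^ n *ᵥ |e| := by
    intro n
    induction n with
    | zero => simp
    | succ n ih =>
      rw [pow_succ', ← mulVec_mulVec]
      exact he.trans (mulVec_mono_of_nonneg hA ih)
  funext i
  have hlim : Filter.Tendsto (fun n => ‖e‖ * (A ^ n *ᵥ 1) i) Filter.atTop (nhds 0) := by
    simpa using ((hsum i).tendsto_atTop_zero).const_mul ‖e‖
  refine abs_nonpos_iff.1 (ge_of_tendsto' hlim fun n => ?_)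
  simpa using (hiter n).trans (pow_mulVec_abs_le hA n e) i

lemma eq_of_eq_add_mulVec_on (hA : ∀ i j, 0 ≤ A i j)
    (hsum : ∀ i, Summable fun n => (A ^ n *ᵥ 1) i) (B : Finset S) {f v w : S → ℝ}
    (hv : ∀ m ∈ B, v m = f m + (A *ᵥ v) m) (hw : ∀ m ∈ B, w m = f m + (A *ᵥ w) m)
    (hvw : ∀ m ∉ B, v m = w m) : v = w := by
  refine sub_eq_zero.1 (eq_zero_of_abs_le_mulVec_abs hA hsum fun m => ?_)
  by_cases hm : m ∈ B
  · have hfix : (v - w) m = (A *ᵥ (v - w)) m := by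
      rw [mulVec_sub, Pi.sub_apply, Pi.sub_apply, hv m hm, hw m hm]
      ring
    rw [Pi.abs_apply, hfix]
    exact abs_mulVec_le_mulVec_abs hA _ m
  · rw [Pi.abs_apply, Pi.sub_apply, hvw m hm, sub_self, abs_zero]
    exact mulVec_nonneg_of_nonneg hA (abs_nonneg _) m

end Matrix

def tabooMat {S R : Type*} [DecidableEq S] [Zero R] (P : Matrix S S R) (z : S) : Matrix S S R :=
  Matrix.of fun j k => if k = z then 0 else P j k

section Taboo

open Matrix

variable {S : Type*} [DecidableEq S] {P : Matrix S S ℝ} {z : S}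

lemma tabooMat_nonneg (hP : ∀ i j, 0 ≤ P i j) (i j : S) : 0 ≤ tabooMat P z i j := by
  simp only [tabooMat, of_apply]
  split_ifs
  exacts [le_rfl, hP i j]

variable [Fintype S]

lemma tabooMat_mulVec (v : S → ℝ) : tabooMat P z *ᵥ v = P *ᵥ Function.update v z 0 := by
  ext j
  simp only [mulVec, dotProduct, tabooMat, of_apply, Function.update_apply]
  exact Finset.sum_congr rfl fun k _ => by split_ifs <;> simp

lemma tabooMat_pow_mulVec_le (hP : ∀ i j, 0 ≤ P i j) {v : S → ℝ} (hv : 0 ≤ v) (n : ℕ) :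
    tabooMat P z ^ n *ᵥ v ≤ P ^ n *ᵥ v := by
  induction n with
  | zero => simp
  | succ n ih =>
    rw [pow_succ', pow_succ', ← mulVec_mulVec, ← mulVec_mulVec, tabooMat_mulVec]
    have hPn : 0 ≤ P ^ n *ᵥ v := mulVec_nonneg_of_nonneg (pow_apply_nonneg hP n) hv
    refine mulVec_mono_of_nonneg hP fun k => ?_
    rw [Function.update_apply]
    split_ifs
    · exact hPn k
    · exact ih k

lemma tabooMat_pow_mulVec_one_le (hP : P ∈ rowStochastic ℝ S) {n : ℕ} (hn : 0 < n) (j : S) :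
    (tabooMat P z ^ n *ᵥ 1) j ≤ 1 - (P ^ n) j z := by
  obtain ⟨m, rfl⟩ := Nat.exists_eq_add_one_of_ne_zero hn.ne'
  have hone : Function.update (1 : S → ℝ) z 0 = 1 - Pi.single z 1 := by
    ext k
    by_cases hk : k = z <;> simp [hk]
  calc (tabooMat P z ^ (m + 1) *ᵥ 1) j
        = (tabooMat P z ^ m *ᵥ (P *ᵥ (1 - Pi.single z 1))) j := by
        rw [pow_succ, ← mulVec_mulVec, tabooMat_mulVec, hone]
    _ ≤ (P ^ m *ᵥ (P *ᵥ (1 - Pi.single z 1))) j := by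
        refine tabooMat_pow_mulVec_le hP.1 (mulVec_nonneg_of_nonneg hP.1 fun k => ?_) m j
        by_cases hk : k = z <;> simp [hk]
    _ = 1 - (P ^ (m + 1)) j z := by
        rw [mulVec_mulVec, ← pow_succ, mulVec_sub, (pow_mem hP (m + 1)).2, mulVec_single_one]
        simp

lemma tabooMat_mulVec_one_le_one (hP : P ∈ rowStochastic ℝ S) : tabooMat P z *ᵥ 1 ≤ 1 := by
  intro j
  simpa using (tabooMat_pow_mulVec_one_le hP one_pos j).trans
    (sub_le_self 1 (pow_apply_nonneg hP.1 1 j z))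

lemma summable_tabooMat_pow_mulVec_one (hP : P ∈ rowStochastic ℝ S)
    (hreach : ∀ j, ∃ n, 0 < n ∧ 0 < (P ^ n) j z) (i : S) :
    Summable fun n => (tabooMat P z ^ n *ᵥ 1) i := by
  choose n hn hnz using hreach
  set Q := tabooMat P z
  set N := Finset.univ.sup n
  have hnN : ∀ j, n j ≤ N := fun j => Finset.le_sup (Finset.mem_univ j)
  have hlt : ∀ j, (Q ^ N *ᵥ 1) j < 1 := fun j =>
    calc (Q ^ N *ᵥ 1) j ≤ (Q ^ n j *ᵥ 1) j :=
          antitone_pow_mulVec_one (tabooMat_nonneg hP.1) (tabooMat_mulVec_one_le_one hP)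
            (hnN j) j
      _ ≤ 1 - (P ^ n j) j z := tabooMat_pow_mulVec_one_le hP (hn j) j
      _ < 1 := sub_lt_self 1 (hnz j)
  -- the `max` with `2⁻¹` only makes `θ` positive
  set θ := max (Finset.univ.sup' ⟨z, Finset.mem_univ z⟩ fun j => (Q ^ N *ᵥ 1) j) 2⁻¹
  refine summable_pow_mulVec_one (tabooMat_nonneg hP.1) (tabooMat_mulVec_one_le_one hP)
    ((hn z).trans_le (hnN z)) (θ := θ) (by positivity)
    (max_lt ((Finset.sup'_lt_iff _).2 fun j _ => hlt j) (by norm_num)) (fun j => ?_) i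
  rw [Pi.smul_apply, Pi.one_apply, smul_eq_mul, mul_one]
  exact (Finset.le_sup' (fun j => (Q ^ N *ᵥ 1) j) (Finset.mem_univ j)).trans (le_max_left _ _)

end Taboo

section Passage

open Matrix

variable {S : Type*} [Fintype S]

lemma pathWt_snoc (P : Matrix S S ℝ) {n : ℕ} (x : Fin (n + 1) → S) (b : S) :
    pathWt P (Fin.snoc x b : Fin (n + 2) → S) = pathWt P x * P (x (Fin.last n)) b := by
  simp only [pathWt, Fin.prod_univ_castSucc, Fin.succ_castSucc, Fin.snoc_castSucc, Fin.succ_last,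
    Fin.snoc_last]

variable [DecidableEq S]

lemma sum_pathWt_mul (P : Matrix S S ℝ) (n : ℕ) (i : S) (g : S → ℝ) :
    ∑ x ∈ Finset.univ.filter (fun x : Fin (n + 1) → S => x 0 = i),
      pathWt P x * g (x (Fin.last n)) = (P ^ n *ᵥ g) i := by
  induction n generalizing g with
  | zero =>
    rw [Finset.sum_filter, ← (Equiv.funUnique (Fin 1) S).symm.sum_comp]
    simp [pathWt]
  | succ n ih =>
    rw [pow_succ, ← mulVec_mulVec, ← ih, Finset.sum_filter, Finset.sum_filter,
      ← (Fin.snocEquiv fun _ => S).sum_comp, Fintype.sum_prod_type_right]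
    refine Finset.sum_congr rfl fun x _ => ?_
    have hsnoc : ∀ b, (Fin.snocEquiv fun _ => S) (b, x) = Fin.snoc x b := fun _ => rfl
    simp [hsnoc, pathWt_snoc, mulVec, dotProduct, Finset.mul_sum, mul_assoc]

lemma pathWt_tabooMat (P : Matrix S S ℝ) (z : S) {n : ℕ} (x : Fin (n + 1) → S) :
    pathWt (tabooMat P z) x = if ∀ t : Fin n, x t.succ ≠ z then pathWt P x else 0 := by
  simp only [pathWt, tabooMat, of_apply]
  split_ifs with h
  · exact Finset.prod_congr rfl fun t _ => if_neg (h t)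
  · obtain ⟨t, ht⟩ := not_forall_not.1 h
    exact Finset.prod_eq_zero (Finset.mem_univ t) (if_pos ht)

lemma passTerm_eq_tabooMat_pow_mulVec (P : Matrix S S ℝ) (i z : S) (f : S → ℝ) (n : ℕ) :
    passTerm P i z f n = (tabooMat P z ^ n *ᵥ f) i := by
  rw [← sum_pathWt_mul, passTerm, ← Finset.filter_filter, Finset.sum_filter]
  simp only [pathWt_tabooMat, ite_mul, zero_mul]
  congr!

variable {P : Matrix S S ℝ} {z : S}

lemma passSum_eq_add_tabooMat_mulVec (hP : P ∈ rowStochastic ℝ S)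
    (hreach : ∀ j, ∃ n, 0 < n ∧ 0 < (P ^ n) j z) (f : S → ℝ) (i : S) :
    passSum P i z f = f i + (tabooMat P z *ᵥ fun j => passSum P j z f) i := by
  have hsum := summable_pow_mulVec (tabooMat_nonneg hP.1)
    (summable_tabooMat_pow_mulVec_one hP hreach) f
  simp only [passSum, passTerm_eq_tabooMat_pow_mulVec]
  rw [(hsum i).tsum_eq_zero_add]
  simp only [pow_succ', ← mulVec_mulVec, pow_zero, one_mulVec]
  congr 1
  change ∑' n, ∑ j, tabooMat P z i j * (tabooMat P z ^ n *ᵥ f) j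
    = ∑ j, tabooMat P z i j * ∑' n, (tabooMat P z ^ n *ᵥ f) j
  rw [Summable.tsum_finsetSum fun j _ => (hsum j).mul_left _]
  simp_rw [tsum_mul_left]

end Passage

namespace MDP

open Matrix

variable {S A : Type*} [Fintype S]

lemma ptail_nonneg (M : MDP S A) (T : SFTree S) (i : S) (a : A) (k : S) :
    0 ≤ M.ptail T i a k :=
  Finset.sum_nonneg fun s _ => M.p_nonneg i a s

variable [DecidableEq S]

lemma Pmat_mem_rowStochastic (M : MDP S A) (d : S → A) : M.Pmat d ∈ rowStochastic ℝ S :=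
  mem_rowStochastic_iff_sum.2 ⟨fun i j => M.p_nonneg i (d i) j, fun i => M.p_sum_one i (d i)⟩

variable {M : MDP S A} {T : SFTree S}

lemma IsSkipFree.sum_mul_eq (hsf : M.IsSkipFree T) {i : S} (hi : i ≠ T.root) (a : A)
    (g : S → ℝ) : ∑ l, M.p i a l * g l
      = M.p i a (T.parent i) * g (T.parent i) + ∑ l ∈ T.subtree i, M.p i a l * g l := by
  rw [← Finset.sum_insert (f := fun l => M.p i a l * g l) (T.parent_not_mem_subtree hi)]
  refine (Finset.sum_subset (Finset.subset_univ _) fun l _ hl => ?_).symm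
  by_contra h
  rcases hsf i hi a l (left_ne_zero_of_mul h) with rfl | hl'
  · exact hl (Finset.mem_insert_self _ _)
  · exact hl (Finset.mem_insert_of_mem hl')

lemma IsSkipFree.sum_subtree (hsf : M.IsSkipFree T) {i : S} (hi : i ≠ T.root) (a : A) :
    ∑ l ∈ T.subtree i, M.p i a l = 1 - M.p i a (T.parent i) := by
  have h := hsf.sum_mul_eq hi a 1
  simp only [Pi.one_apply, mul_one, M.p_sum_one] at h
  linarith

lemma IsSkipFree.sum_subtree_mul_add_sum_delta (hsf : M.IsSkipFree T) {i : S} (hi : i ≠ T.root)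
    (a : A) (W : ℝ) (u : S → ℝ) :
    ∑ l ∈ T.subtree i, M.p i a l * (W + ∑ k ∈ T.delta i l, u k)
      = (1 - M.p i a (T.parent i)) * W + ∑ k ∈ T.desc i, M.ptail T i a k * u k := by
  simp only [mul_add, Finset.sum_add_distrib]
  rw [T.sum_subtree_mul_sum_delta, ← Finset.sum_mul, hsf.sum_subtree hi]
  rfl

lemma IsSkipFree.Pmat_mulVec_apply (hsf : M.IsSkipFree T) {i : S} (hi : i ≠ T.root)
    (d : S → A) (W : ℝ) (u g : S → ℝ) (hg : ∀ l ∈ T.subtree i, g l = W + ∑ k ∈ T.delta i l, u k) :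
    (M.Pmat d *ᵥ g) i = M.p i (d i) (T.parent i) * g (T.parent i)
      + ((1 - M.p i (d i) (T.parent i)) * W + ∑ k ∈ T.desc i, M.ptail T i (d i) k * u k) := by
  have hsub : ∑ l ∈ T.subtree i, M.p i (d i) l * g l
      = ∑ l ∈ T.subtree i, M.p i (d i) l * (W + ∑ k ∈ T.delta i l, u k) :=
    Finset.sum_congr rfl fun l hl => by rw [hg l hl]
  rw [← hsf.sum_subtree_mul_add_sum_delta hi, ← hsub, ← hsf.sum_mul_eq hi]
  rfl

noncomputable def parentPassCost (M : MDP S A) (T : SFTree S) (d : S → A) (x : ℝ) (k : S) :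
    ℝ :=
  passSum (M.Pmat d) k (T.parent k) fun s => M.cvec d s - x

/-- The right-hand side of the downward recursion defining `y`. -/
noncomputable def downwardStep (M : MDP S A) (T : SFTree S) (x : ℝ) (i : S) (a : A)
    (u : S → ℝ) : ℝ :=
  (M.c i a - x + ∑ k ∈ T.desc i, M.ptail T i a k * u k) / M.p i a (T.parent i)

lemma mul_parentPassCost_eq_of_passSum_eq (hsf : M.IsSkipFree T) (hrec : IsRecurrentModel M)
    (d : S → A) (x : ℝ) {j : S} (hj : j ≠ T.root)
    (hdecomp : ∀ m ∈ T.subtree j, passSum (M.Pmat d) m (T.parent j) (fun s => M.cvec d s - x)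
      = ∑ k ∈ T.delta (T.parent j) m, M.parentPassCost T d x k) :
    M.p j (d j) (T.parent j) * M.parentPassCost T d x j
      = M.c j (d j) - x + ∑ k ∈ T.desc j, M.ptail T j (d j) k * M.parentPassCost T d x k := by
  set u := M.parentPassCost T d x
  have hstep := passSum_eq_add_tabooMat_mulVec (M.Pmat_mem_rowStochastic d)
    (fun i => hrec d i (T.parent j)) (fun s => M.cvec d s - x) j
  rw [tabooMat_mulVec, hsf.Pmat_mulVec_apply hj d (u j) u] at hstep
  · rw [Function.update_self, mul_zero, zero_add] at hstep
    change u j = _ at hstep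
    simp only [cvec] at hstep
    linarith
  · intro l hl
    rw [Function.update_of_ne (ne_of_mem_of_not_mem hl (T.parent_not_mem_subtree hj)),
      hdecomp l hl, T.sum_delta_eq_add u (T.mem_subtree_parent j) hl, T.delta_parent_self hj,
      Finset.sum_singleton]

lemma sum_delta_eq_add_tabooMat_mulVec (hsf : M.IsSkipFree T) (d : S → A) (x : ℝ) (u : S → ℝ)
    {j m : S} (hj : j ≠ T.root) (hm : m ∈ T.desc j)
    (hm_rec : M.p m (d m) (T.parent m) * u m
      = M.c m (d m) - x + ∑ k ∈ T.desc m, M.ptail T m (d m) k * u k)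
    {w : S → ℝ} (hw : ∀ l ∈ T.subtree j, w l = ∑ k ∈ T.delta (T.parent j) l, u k) :
    w m = M.cvec d m - x + (tabooMat (M.Pmat d) (T.parent j) *ᵥ w) m := by
  obtain ⟨hmj, hne⟩ := T.mem_desc.1 hm
  have hm_root : m ≠ T.root := T.ne_root_of_mem_subtree hj hmj
  have hm_desc : m ∈ T.desc (T.parent j) := T.mem_desc.2
    ⟨T.subtree_subset (T.mem_subtree_parent j) hmj,
      fun h => T.parent_not_mem_subtree hj (h ▸ hmj)⟩
  have hupd : ∀ l ∈ T.subtree j, Function.update w (T.parent j) 0 l = w l := fun l hl =>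
    Function.update_of_ne (ne_of_mem_of_not_mem hl (T.parent_not_mem_subtree hj)) _ _
  have hpm := T.parent_mem_subtree hmj hne
  rw [tabooMat_mulVec, hsf.Pmat_mulVec_apply hm_root d (w m) u, hupd _ hpm, hw _ hpm, hw m hmj,
    T.sum_delta_parent u hm_desc]
  · simp only [cvec]
    linarith
  · intro l hl
    rw [hupd l (T.subtree_subset hmj hl), hw l (T.subtree_subset hmj hl), hw m hmj,
      T.sum_delta_eq_add u (T.mem_desc.1 hm_desc).1 hl]

theorem passSum_parent_eq_sum_delta (hsf : M.IsSkipFree T) (hrec : IsRecurrentModel M)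
    (d : S → A) (x : ℝ) {j : S} (hj : j ≠ T.root) {m : S} (hm : m ∈ T.subtree j) :
    passSum (M.Pmat d) m (T.parent j) (fun s => M.cvec d s - x)
      = ∑ k ∈ T.delta (T.parent j) m, M.parentPassCost T d x k := by
  induction j using T.desc_induction generalizing m with
  | h j ih =>
    set u := M.parentPassCost T d x
    set v := fun l => passSum (M.Pmat d) l (T.parent j) (fun s => M.cvec d s - x)
    set w := fun l => if l ∈ T.subtree j then ∑ k ∈ T.delta (T.parent j) l, u k else v l
    have hP := M.Pmat_mem_rowStochastic d
    have hreach := fun i => hrec d i (T.parent j)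
    -- `j` is a boundary state: `w j = v j` holds by definition, whereas the first-step
    -- equation of `w` at `j` is what `mul_parentPassCost_eq` derives from this lemma
    have hvw : v = w := by
      refine eq_of_eq_add_mulVec_on (tabooMat_nonneg hP.1)
        (summable_tabooMat_pow_mulVec_one hP hreach) (T.desc j)
        (fun l _ => passSum_eq_add_tabooMat_mulVec hP hreach _ l) (fun l hl => ?_)
        (fun l hl => ?_)
      · have hl_root := T.ne_root_of_mem_subtree hj (T.mem_desc.1 hl).1
        exact sum_delta_eq_add_tabooMat_mulVec hsf d x u hj hl
          (mul_parentPassCost_eq_of_passSum_eq hsf hrec d x hl_root fun m hm =>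
            ih l hl hl_root hm)
          fun l hl => if_pos hl
      · by_cases hlj : l ∈ T.subtree j
        · obtain rfl : l = j := by_contra fun hne => hl (T.mem_desc.2 ⟨hlj, hne⟩)
          simp only [w, if_pos hlj, T.delta_parent_self hj, Finset.sum_singleton]
          rfl
        · exact (if_neg hlj).symm
    simpa [w, hm] using congr_fun hvw m

theorem mul_parentPassCost_eq (hsf : M.IsSkipFree T) (hrec : IsRecurrentModel M)
    (d : S → A) (x : ℝ) {j : S} (hj : j ≠ T.root) :
    M.p j (d j) (T.parent j) * M.parentPassCost T d x j
      = M.c j (d j) - x + ∑ k ∈ T.desc j, M.ptail T j (d j) k * M.parentPassCost T d x k :=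
  mul_parentPassCost_eq_of_passSum_eq hsf hrec d x hj fun _ hm =>
    passSum_parent_eq_sum_delta hsf hrec d x hj hm

lemma parentPassCost_eq_downwardStep (hsf : M.IsSkipFree T) (hrec : IsRecurrentModel M)
    (hpar : ∀ i, i ≠ T.root → ∀ a : A, 0 < M.p i a (T.parent i)) (d : S → A) (x : ℝ) {j : S}
    (hj : j ≠ T.root) :
    M.parentPassCost T d x j = M.downwardStep T x j (d j) (M.parentPassCost T d x) := by
  rw [downwardStep, eq_div_iff (hpar j hj (d j)).ne', mul_comm]
  exact mul_parentPassCost_eq hsf hrec d x hj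

lemma downwardStep_mono (hpar : ∀ i, i ≠ T.root → ∀ a : A, 0 < M.p i a (T.parent i)) (x : ℝ)
    {i : S} (hi : i ≠ T.root) (a : A) {u v : S → ℝ} (huv : ∀ k ∈ T.desc i, u k ≤ v k) :
    M.downwardStep T x i a u ≤ M.downwardStep T x i a v := by
  refine div_le_div_of_nonneg_right (add_le_add_right (Finset.sum_le_sum fun k hk => ?_) _)
    (hpar i hi a).le
  exact mul_le_mul_of_nonneg_left (huv k hk) (M.ptail_nonneg T i a k)

theorem le_parentPassCost_of_le_downwardStep (hsf : M.IsSkipFree T)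
    (hrec : IsRecurrentModel M) (hpar : ∀ i, i ≠ T.root → ∀ a : A, 0 < M.p i a (T.parent i))
    (d : S → A) (x : ℝ) {y : S → ℝ}
    (hy : ∀ i, i ≠ T.root → y i ≤ M.downwardStep T x i (d i) y) {i : S} (hi : i ≠ T.root) :
    y i ≤ M.parentPassCost T d x i := by
  induction i using T.desc_induction with
  | h j ih =>
    rw [parentPassCost_eq_downwardStep hsf hrec hpar d x hi]
    exact (hy j hi).trans <| downwardStep_mono hpar x hi (d j) fun k hk =>
      ih k hk (T.ne_root_of_mem_subtree hi (T.mem_desc.1 hk).1)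

theorem parentPassCost_le_of_downwardStep_le (hsf : M.IsSkipFree T)
    (hrec : IsRecurrentModel M) (hpar : ∀ i, i ≠ T.root → ∀ a : A, 0 < M.p i a (T.parent i))
    (d : S → A) (x : ℝ) {y : S → ℝ}
    (hy : ∀ i, i ≠ T.root → M.downwardStep T x i (d i) y ≤ y i) {i : S} (hi : i ≠ T.root) :
    M.parentPassCost T d x i ≤ y i := by
  induction i using T.desc_induction with
  | h j ih =>
    rw [parentPassCost_eq_downwardStep hsf hrec hpar d x hi]
    refine (downwardStep_mono hpar x hi (d j) fun k hk => ?_).trans (hy j hi)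
    exact ih k hk (T.ne_root_of_mem_subtree hi (T.mem_desc.1 hk).1)

theorem passSum_root_eq_sum_delta (hsf : M.IsSkipFree T) (hrec : IsRecurrentModel M)
    (d : S → A) (x : ℝ) {i : S} (hi : i ≠ T.root) :
    passSum (M.Pmat d) i T.root (fun s => M.cvec d s - x)
      = ∑ k ∈ T.delta T.root i, M.parentPassCost T d x k := by
  obtain ⟨t, ht, hpt, hit⟩ := T.exists_parent_eq_root_of_ne_root hi
  rw [← hpt]
  exact passSum_parent_eq_sum_delta hsf hrec d x ht hit

end MDP

theorem stmt4_general {S A : Type*} [Fintype S] [DecidableEq S] [Fintype A]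
    (T : SFTree S) (M : MDP S A)
    (hsf : M.IsSkipFree T) (hrec : IsRecurrentModel M)
    (hpar : ∀ i, i ≠ T.root → ∀ a : A, 0 < M.p i a (T.parent i))
    (x : ℝ) (y : S → ℝ) (aSel : S → A)
    (hy : ∀ i, i ≠ T.root →
      y i = ⨅ a : A, (M.c i a - x + ∑ k ∈ T.desc i, M.ptail T i a k * y k)
          / M.p i a (T.parent i))
    (ha : ∀ i, i ≠ T.root →
      (M.c i (aSel i) - x + ∑ k ∈ T.desc i, M.ptail T i (aSel i) k * y k)
          / M.p i (aSel i) (T.parent i) = y i) :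
    (∀ d' : S → A, ∀ i, i ≠ T.root →
        y i ≤ passSum (M.Pmat d') i (T.parent i) (fun s => M.cvec d' s - x))
    ∧ (∀ d : S → A, (∀ i, i ≠ T.root → d i = aSel i) →
        ∀ i, i ≠ T.root →
          passSum (M.Pmat d) i (T.parent i) (fun s => M.cvec d s - x) = y i)
    ∧ (∀ i, i ≠ T.root →
        (⨅ d' : S → A, passSum (M.Pmat d') i T.root (fun s => M.cvec d' s - x))
          = ∑ k ∈ T.delta T.root i, y k) := by
  have lower : ∀ d' : S → A, ∀ i, i ≠ T.root → y i ≤ M.parentPassCost T d' x i :=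
    fun d' _ => MDP.le_parentPassCost_of_le_downwardStep hsf hrec hpar d' x fun j hj =>
      (hy j hj).trans_le (ciInf_le (Set.finite_range _).bddBelow (d' j))
  have attained : ∀ d : S → A, (∀ i, i ≠ T.root → d i = aSel i) →
      ∀ i, i ≠ T.root → M.parentPassCost T d x i = y i := by
    intro d hd i hi
    have hstep : ∀ j, j ≠ T.root → M.downwardStep T x j (d j) y = y j := fun j hj => by
      rw [hd j hj]
      exact ha j hj
    exact le_antisymm
      (MDP.parentPassCost_le_of_downwardStep_le hsf hrec hpar d x (fun j hj => (hstep j hj).le) hi)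
      (lower d i hi)
  refine ⟨lower, attained, fun i hi => ?_⟩
  have hne : ∀ k ∈ T.delta T.root i, k ≠ T.root := fun k hk =>
    (T.mem_desc.1 (T.mem_delta.1 hk).1).2
  have : Nonempty (S → A) := ⟨aSel⟩
  refine IsGLB.ciInf_eq (IsLeast.isGLB ⟨⟨aSel, ?_⟩, Set.forall_mem_range.2 fun d' => ?_⟩)
  · exact (MDP.passSum_root_eq_sum_delta hsf hrec aSel x hi).trans
      (Finset.sum_congr rfl fun k hk => attained aSel (fun _ _ => rfl) k (hne k hk))
  · exact (Finset.sum_le_sum fun k hk => lower d' k (hne k hk)).trans_eq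
      (MDP.passSum_root_eq_sum_delta hsf hrec d' x hi).symm

/-- for a finite recurrent skip-free MDP on a tree and fixed `x`, if
`y` satisfies the downward recursion (minimising over actions, attained by `aSel`), then
`y i` is a lower bound on the expected `x`-revised first-passage cost from `i` to its parent
under any policy, is attained by any policy agreeing with `aSel` off the root, and the
minimal expected `x`-revised cost until first passage from `i` to the root equals
`∑_{k ∈ Δ(root,i)} y k`. -/
theorem stmt4 {S A : Type*} [Fintype S] [DecidableEq S] [Fintype A] [Nonempty A]
    (T : SFTree S) (M : MDP S A)
    (hsf : M.IsSkipFree T) (hrec : IsRecurrentModel M)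
    (h00 : ∀ a : A, M.p T.root a T.root < 1)
    (hpar : ∀ i, i ≠ T.root → ∀ a : A, 0 < M.p i a (T.parent i))
    (x : ℝ) (y : S → ℝ) (aSel : S → A)
    (hy : ∀ i, i ≠ T.root →
      y i = ⨅ a : A, (M.c i a - x + ∑ k ∈ T.desc i, M.ptail T i a k * y k)
          / M.p i a (T.parent i))
    (ha : ∀ i, i ≠ T.root →
      (M.c i (aSel i) - x + ∑ k ∈ T.desc i, M.ptail T i (aSel i) k * y k)
          / M.p i (aSel i) (T.parent i) = y i) :
    (∀ d' : S → A, ∀ i, i ≠ T.root →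
        y i ≤ passSum (M.Pmat d') i (T.parent i) (fun s => M.cvec d' s - x))
    ∧ (∀ d : S → A, (∀ i, i ≠ T.root → d i = aSel i) →
        ∀ i, i ≠ T.root →
          passSum (M.Pmat d) i (T.parent i) (fun s => M.cvec d s - x) = y i)
    ∧ (∀ i, i ≠ T.root →
        (⨅ d' : S → A, passSum (M.Pmat d') i T.root (fun s => M.cvec d' s - x))
          = ∑ k ∈ T.delta T.root i, y k) :=
  stmt4_general T M hsf hrec hpar x y aSel hy ha
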